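/- arXiv:math/0501418 — 2 statements merged into one kernel-verified Lean document; each statement's English description precedes it below -/
import Mathlib

section
/- Let A, A', B, B' be lattices with least elements and let f : A → A' and g : B → B' be lattice homomorphisms preserving the least element. Then the map h defined by h(X) = ⋃{ f(x) ⊠ g(y) : ⟨x,y⟩ ∈ X } sends every element of A ⊠ B to an element of A' ⊠ B', satisfies h(a ⊠ b) = f(a) ⊠ g(b) for all ⟨a,b⟩ ∈ A × B, and is a {∨,0}-homomorphism from A ⊠ B to A' ⊠ B'. Moreover, if f and g are both lattice embeddings (injective), then h is a lattice embedding of A ⊠ B into A' ⊠ B'. -/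
/-!
Every element of `A ⊠ B` has the form `a ⊠ b ∩ ⋂ᵢ (aᵢ □ bᵢ)`. Since
`(x ⊠ y) ∩ (c □ d) = ((x ∧ c) ⊠ y) ∪ (x ⊠ (y ∧ d))` and `f`, `g` preserve meets, `h` commutes with
intersecting a tensor-closed set by a box; hence
`h(a ⊠ b ∩ ⋂ᵢ (aᵢ □ bᵢ)) = f(a) ⊠ g(b) ∩ ⋂ᵢ (f(aᵢ) □ g(bᵢ))`, which lies in `A' ⊠ B'`, and `h`
preserves meets. The same identity shows that every element of `A ⊠ B` is a finite union
`⋃_{r ∈ R} r₁ ⊠ r₂`, whose box closure is `⋂_{T ⊆ R} (⋁_T r₁) □ (⋁_{R ∖ T} r₂)`. As `f` and `g`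
preserve finite joins, every box of `A' × B'` containing `h` of such a union contains the image
of one of these boxes, which gives `h(H ∨ K) = h(H) ∨ h(K)`. When `f` and `g` are embeddings,
`(f x, g y) ∈ h(X)` iff `(x, y) ∈ X`, so `h` is injective.
-/

/-- The pure box `a □ b = {⟨x,y⟩ : x ≤ a or y ≤ b}`. -/
def pureBox {A B : Type*} [Lattice A] [Lattice B] (a : A) (b : B) : Set (A × B) :=
  {p : A × B | p.1 ≤ a ∨ p.2 ≤ b}

/-- `a ∘ b = {⟨x,y⟩ : x ≤ a and y ≤ b}`. -/
def pureCirc {A B : Type*} [Lattice A] [Lattice B] (a : A) (b : B) : Set (A × B) :=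
  {p : A × B | p.1 ≤ a ∧ p.2 ≤ b}

/-- The box product `A □ B`: all finite (nonempty) intersections of pure boxes. -/
def BoxProd (A B : Type*) [Lattice A] [Lattice B] : Set (Set (A × B)) :=
  {H | ∃ (n : ℕ) (a : Fin (n + 1) → A) (b : Fin (n + 1) → B),
    H = ⋂ i, pureBox (a i) (b i)}

/-- `A ⊡ B`: all finite unions of pure boxes (at least one) and pure circles. -/
def BoxDot (A B : Type*) [Lattice A] [Lattice B] : Set (Set (A × B)) :=
  {H | ∃ (m n : ℕ) (a : Fin (m + 1) → A) (b : Fin (m + 1) → B)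
      (c : Fin n → A) (d : Fin n → B),
    H = (⋃ i, pureBox (a i) (b i)) ∪ ⋃ j, pureCirc (c j) (d j)}

/-- The box closure of a subset of `A × B`: intersection of all pure boxes containing it. -/
def BoxCl {A B : Type*} [Lattice A] [Lattice B] (X : Set (A × B)) : Set (A × B) :=
  ⋂ (a : A) (b : B) (_ : X ⊆ pureBox a b), pureBox a b

/-- The pure lattice tensor `a ⊠ b = (a ∘ b) ∪ ⊥_{A,B}`, where `⊥_{A,B}` consists of
the pairs one of whose coordinates is a least element. -/
def pureTens {A B : Type*} [Lattice A] [Lattice B] (a : A) (b : B) : Set (A × B) :=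
  pureCirc a b ∪ {p : A × B | IsBot p.1 ∨ IsBot p.2}

/-- A subset of `A × B` is confined if it is contained in some pure lattice tensor. -/
def Confined {A B : Type*} [Lattice A] [Lattice B] (X : Set (A × B)) : Prop :=
  ∃ (a : A) (b : B), X ⊆ pureTens a b

/-- The lattice tensor product `A ⊠ B`: all confined elements of `A □ B`. -/
def LatTens (A B : Type*) [Lattice A] [Lattice B] : Set (Set (A × B)) :=
  {H | H ∈ BoxProd A B ∧ Confined H}

/-- `X^△ = {⟨a,b⟩ : ⟨x,y⟩ ◁ ⟨a,b⟩ for all ⟨x,y⟩ ∈ X}` where `⟨x,y⟩ ◁ ⟨a,b⟩` iff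
`x ≤ a` or `y ≤ b`. -/
def trUp {A B : Type*} [Lattice A] [Lattice B] (X : Set (A × B)) : Set (A × B) :=
  {p : A × B | ∀ q ∈ X, q.1 ≤ p.1 ∨ q.2 ≤ p.2}

/-- `X^▽ = {⟨a,b⟩ : ⟨a,b⟩ ◁ ⟨x,y⟩ for all ⟨x,y⟩ ∈ X}`. -/
def trDown {A B : Type*} [Lattice A] [Lattice B] (X : Set (A × B)) : Set (A × B) :=
  {p : A × B | ∀ q ∈ X, p.1 ≤ q.1 ∨ p.2 ≤ q.2}

section Lattice

variable {A B : Type*} [Lattice A] [Lattice B]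

theorem mem_pureTens_self (a : A) (b : B) : (a, b) ∈ pureTens a b :=
  Or.inl ⟨le_rfl, le_rfl⟩

theorem pureTens_subset_pureBox_iff {x a : A} {y b : B} :
    pureTens x y ⊆ pureBox a b ↔ x ≤ a ∨ y ≤ b := by
  refine ⟨fun h => h (mem_pureTens_self x y), fun h p hp => ?_⟩
  rcases hp with ⟨hx, hy⟩ | hbot | hbot
  · exact h.imp hx.trans hy.trans
  · exact Or.inl (hbot a)
  · exact Or.inr (hbot b)

theorem pureTens_inter_pureBox (x c : A) (y d : B) :
    pureTens x y ∩ pureBox c d = pureTens (x ⊓ c) y ∪ pureTens x (y ⊓ d) := by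
  ext p
  have h₁ : IsBot p.1 → p.1 ≤ c := fun h => h c
  have h₂ : IsBot p.2 → p.2 ≤ d := fun h => h d
  simp only [pureTens, pureCirc, pureBox, Set.mem_inter_iff, Set.mem_union, Set.mem_ofPred_eq,
    le_inf_iff]
  tauto

def IsTensorClosed (X : Set (A × B)) : Prop :=
  ∀ p ∈ X, pureTens p.1 p.2 ⊆ X

theorem isTensorClosed_pureBox (a : A) (b : B) : IsTensorClosed (pureBox a b) :=
  fun _ hp => pureTens_subset_pureBox_iff.mpr hp

theorem IsTensorClosed.inter {X Y : Set (A × B)} (hX : IsTensorClosed X) (hY : IsTensorClosed Y) :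
    IsTensorClosed (X ∩ Y) :=
  fun p hp => Set.subset_inter (hX p hp.1) (hY p hp.2)

theorem isTensorClosed_biInter_pureBox {ι : Type*} (s : Finset ι) (a : ι → A) (b : ι → B) :
    IsTensorClosed (⋂ i ∈ s, pureBox (a i) (b i)) := fun p hp =>
  Set.subset_iInter₂ fun i hi => isTensorClosed_pureBox _ _ p (Set.mem_iInter₂.mp hp i hi)

theorem subset_boxCl (X : Set (A × B)) : X ⊆ BoxCl X :=
  fun _ hp => Set.mem_iInter₂.mpr fun _ _ => Set.mem_iInter.mpr fun h => h hp

theorem boxCl_subset_pureBox {X : Set (A × B)} {a : A} {b : B} (h : X ⊆ pureBox a b) :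
    BoxCl X ⊆ pureBox a b :=
  fun _ hp => Set.mem_iInter.mp (Set.mem_iInter₂.mp hp a b) h

theorem boxCl_subset_of_mem_boxProd {X Y : Set (A × B)} (hY : Y ∈ BoxProd A B) (h : X ⊆ Y) :
    BoxCl X ⊆ Y := by
  obtain ⟨n, a, b, rfl⟩ := hY
  exact Set.subset_iInter fun i => boxCl_subset_pureBox (h.trans (Set.iInter_subset _ i))

theorem mem_boxProd_iff {H : Set (A × B)} :
    H ∈ BoxProd A B ↔ ∃ s : Finset (A × B), s.Nonempty ∧ H = ⋂ p ∈ s, pureBox p.1 p.2 := by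
  classical
  constructor
  · rintro ⟨n, a, b, rfl⟩
    refine ⟨Finset.univ.image fun i => (a i, b i), Finset.univ_nonempty.image _, ?_⟩
    rw [Finset.set_biInter_finset_image]
    simp
  · rintro ⟨s, hs, rfl⟩
    induction hs using Finset.Nonempty.cons_induction with
    | singleton p => exact ⟨0, fun _ => p.1, fun _ => p.2, by simp [Set.iInter_const]⟩
    | cons p s _ _ ih =>
      obtain ⟨n, a, b, h⟩ := ih
      refine ⟨n + 1, Fin.cons p.1 a, Fin.cons p.2 b, ?_⟩
      rw [Finset.cons_eq_insert, Finset.set_biInter_insert, h]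
      ext q
      simp [Fin.forall_fin_succ]

theorem isTensorClosed_of_mem_boxProd {H : Set (A × B)} (hH : H ∈ BoxProd A B) :
    IsTensorClosed H := by
  obtain ⟨s, -, rfl⟩ := mem_boxProd_iff.mp hH
  exact isTensorClosed_biInter_pureBox s _ _

theorem isTensorClosed_boxCl (X : Set (A × B)) : IsTensorClosed (BoxCl X) := fun p hp =>
  Set.subset_iInter₂ fun a b => Set.subset_iInter fun h =>
    isTensorClosed_pureBox a b p (boxCl_subset_pureBox h hp)

theorem exists_biUnion_pureTens_eq_inter_pureBox (R : Finset (A × B)) (c : A) (d : B) :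
    ∃ R' : Finset (A × B),
      ⋃ r ∈ R', pureTens r.1 r.2 = (⋃ r ∈ R, pureTens r.1 r.2) ∩ pureBox c d := by
  classical
  refine ⟨R.image (fun r => (r.1 ⊓ c, r.2)) ∪ R.image (fun r => (r.1, r.2 ⊓ d)), ?_⟩
  rw [Finset.set_biUnion_union, Finset.set_biUnion_finset_image, Finset.set_biUnion_finset_image,
    Set.iUnion₂_inter]
  simp only [pureTens_inter_pureBox, Set.iUnion_union_distrib]

theorem biUnion_pureTens_subset_pureBox_iff {R : Finset (A × B)} {a : A} {b : B} :
    ⋃ r ∈ R, pureTens r.1 r.2 ⊆ pureBox a b ↔ ∀ r ∈ R, r.1 ≤ a ∨ r.2 ≤ b := by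
  simp only [Set.iUnion₂_subset_iff, pureTens_subset_pureBox_iff]

end Lattice

section OrderBot

variable {A B : Type*} [Lattice A] [OrderBot A] [Lattice B] [OrderBot B]

theorem pureTens_eq_pureBox_inter_pureBox (a : A) (b : B) :
    pureTens a b = pureBox a ⊥ ∩ pureBox ⊥ b := by
  ext p
  simp only [pureTens, pureCirc, pureBox, Set.mem_union, Set.mem_inter_iff, Set.mem_ofPred_eq,
    isBot_iff_eq_bot, le_bot_iff]
  constructor
  · rintro (⟨h₁, h₂⟩ | h | h)
    · exact ⟨Or.inl h₁, Or.inr h₂⟩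
    · exact ⟨Or.inl (h ▸ bot_le), Or.inl h⟩
    · exact ⟨Or.inr h, Or.inr (h ▸ bot_le)⟩
  · rintro ⟨h₁ | h₁, h₂ | h₂⟩
    · exact Or.inr (Or.inl h₂)
    · exact Or.inl ⟨h₁, h₂⟩
    · exact Or.inr (Or.inr h₁)
    · exact Or.inr (Or.inr h₁)

theorem mem_latTens_iff {H : Set (A × B)} :
    H ∈ LatTens A B ↔
      ∃ (a : A) (b : B) (s : Finset (A × B)), H = pureTens a b ∩ ⋂ p ∈ s, pureBox p.1 p.2 := by
  classical
  constructor
  · rintro ⟨hH, a, b, hconf⟩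
    obtain ⟨s, -, hs⟩ := mem_boxProd_iff.mp hH
    exact ⟨a, b, s, by rw [← hs, Set.inter_eq_right.mpr hconf]⟩
  · rintro ⟨a, b, s, rfl⟩
    refine ⟨mem_boxProd_iff.mpr ⟨insert (a, ⊥) (insert (⊥, b) s), Finset.insert_nonempty _ _, ?_⟩,
      a, b, Set.inter_subset_left⟩
    rw [Finset.set_biInter_insert, Finset.set_biInter_insert, pureTens_eq_pureBox_inter_pureBox,
      Set.inter_assoc]

theorem exists_eq_biUnion_pureTens_of_mem_latTens {H : Set (A × B)} (hH : H ∈ LatTens A B) :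
    ∃ R : Finset (A × B), H = ⋃ r ∈ R, pureTens r.1 r.2 := by
  classical
  obtain ⟨a, b, s, rfl⟩ := mem_latTens_iff.mp hH
  clear hH
  induction s using Finset.induction_on with
  | empty => exact ⟨{(a, b)}, by simp⟩
  | insert p s _ ih =>
    obtain ⟨R, hR⟩ := ih
    obtain ⟨R', hR'⟩ := exists_biUnion_pureTens_eq_inter_pureBox R p.1 p.2
    refine ⟨R', ?_⟩
    rw [hR', ← hR, Finset.set_biInter_insert, Set.inter_left_comm, Set.inter_comm]

theorem biUnion_pureTens_subset_pureBox_sup [DecidableEq A] [DecidableEq B]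
    (R T : Finset (A × B)) :
    ⋃ r ∈ R, pureTens r.1 r.2 ⊆ pureBox (T.sup Prod.fst) ((R \ T).sup Prod.snd) := by
  refine biUnion_pureTens_subset_pureBox_iff.mpr fun r hr => ?_
  by_cases hrT : r ∈ T
  · exact Or.inl (Finset.le_sup (f := Prod.fst) hrT)
  · exact Or.inr (Finset.le_sup (f := Prod.snd) (Finset.mem_sdiff.mpr ⟨hr, hrT⟩))

theorem boxCl_biUnion_pureTens [DecidableEq A] [DecidableEq B] (R : Finset (A × B)) :
    BoxCl (⋃ r ∈ R, pureTens r.1 r.2) =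
      ⋂ T ∈ R.powerset, pureBox (T.sup Prod.fst) ((R \ T).sup Prod.snd) := by
  refine (Set.subset_iInter₂ fun T _ =>
    boxCl_subset_pureBox (biUnion_pureTens_subset_pureBox_sup R T)).antisymm fun p hp => ?_
  refine Set.mem_iInter₂.mpr fun a b => Set.mem_iInter.mpr fun hab => ?_
  have hR := biUnion_pureTens_subset_pureBox_iff.mp hab
  classical
  set T := R.filter (·.1 ≤ a)
  have hTa : T.sup Prod.fst ≤ a := Finset.sup_le fun r hr => (Finset.mem_filter.mp hr).2
  have hTb : (R \ T).sup Prod.snd ≤ b := Finset.sup_le fun r hr => by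
    obtain ⟨hrR, hrT⟩ := Finset.mem_sdiff.mp hr
    exact (hR r hrR).resolve_left fun h => hrT (Finset.mem_filter.mpr ⟨hrR, h⟩)
  exact (Set.mem_iInter₂.mp hp T (Finset.filter_subset _ _ |> Finset.mem_powerset.mpr)).imp
    (·.trans hTa) (·.trans hTb)

theorem boxCl_biUnion_pureTens_mem_latTens (R : Finset (A × B)) :
    BoxCl (⋃ r ∈ R, pureTens r.1 r.2) ∈ LatTens A B := by
  classical
  have hconf :
      BoxCl (⋃ r ∈ R, pureTens r.1 r.2) ⊆ pureTens (R.sup Prod.fst) (R.sup Prod.snd) := by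
    rw [pureTens_eq_pureBox_inter_pureBox]
    refine Set.subset_inter (boxCl_subset_pureBox ?_) (boxCl_subset_pureBox ?_) <;>
      refine biUnion_pureTens_subset_pureBox_iff.mpr fun r hr => ?_
    · exact Or.inl (Finset.le_sup (f := Prod.fst) hr)
    · exact Or.inr (Finset.le_sup (f := Prod.snd) hr)
  refine mem_latTens_iff.mpr ⟨R.sup Prod.fst, R.sup Prod.snd,
    R.powerset.image fun T => (T.sup Prod.fst, (R \ T).sup Prod.snd), ?_⟩
  rw [Finset.set_biInter_finset_image, ← boxCl_biUnion_pureTens, Set.inter_eq_right.mpr hconf]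

end OrderBot

section TensMap

variable {A A' B B' : Type*} [Lattice A] [Lattice A'] [Lattice B] [Lattice B']
  (f : LatticeHom A A') (g : LatticeHom B B')

def tensMap (X : Set (A × B)) : Set (A' × B') :=
  ⋃ p ∈ X, pureTens (f p.1) (g p.2)

variable {f g}

theorem tensMap_mono {X Y : Set (A × B)} (h : X ⊆ Y) : tensMap f g X ⊆ tensMap f g Y :=
  Set.biUnion_subset_biUnion_left h

theorem tensMap_union (X Y : Set (A × B)) :
    tensMap f g (X ∪ Y) = tensMap f g X ∪ tensMap f g Y :=
  Set.biUnion_union X Y _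

theorem pureTens_subset_tensMap {X : Set (A × B)} {p : A × B} (hp : p ∈ X) :
    pureTens (f p.1) (g p.2) ⊆ tensMap f g X :=
  Set.subset_biUnion_of_mem (u := fun p : A × B => pureTens (f p.1) (g p.2)) hp

theorem mk_mem_tensMap {X : Set (A × B)} {p : A × B} (hp : p ∈ X) :
    (f p.1, g p.2) ∈ tensMap f g X :=
  pureTens_subset_tensMap hp (mem_pureTens_self _ _)

theorem tensMap_subset {X : Set (A × B)} {Y : Set (A' × B')} (hY : IsTensorClosed Y)
    (h : ∀ p ∈ X, (f p.1, g p.2) ∈ Y) : tensMap f g X ⊆ Y :=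
  Set.iUnion₂_subset fun p hp => hY _ (h p hp)

theorem mk_mem_pureBox_map {p : A × B} {c : A} {d : B} (hp : p ∈ pureBox c d) :
    (f p.1, g p.2) ∈ pureBox (f c) (g d) :=
  hp.imp (fun h => OrderHomClass.mono f h) fun h => OrderHomClass.mono g h

theorem tensMap_biInter_pureBox_subset (s : Finset (A × B)) :
    tensMap f g (⋂ p ∈ s, pureBox p.1 p.2) ⊆ ⋂ p ∈ s, pureBox (f p.1) (g p.2) :=
  tensMap_subset (isTensorClosed_biInter_pureBox s _ _) fun _ hp =>
    Set.mem_iInter₂.mpr fun q hq => mk_mem_pureBox_map (Set.mem_iInter₂.mp hp q hq)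

theorem tensMap_inter_pureBox {X : Set (A × B)} (hX : IsTensorClosed X) (c : A) (d : B) :
    tensMap f g (X ∩ pureBox c d) = tensMap f g X ∩ pureBox (f c) (g d) := by
  refine (Set.subset_inter (tensMap_mono Set.inter_subset_left) ?_).antisymm ?_
  · exact tensMap_subset (isTensorClosed_pureBox _ _) fun _ hp => mk_mem_pureBox_map hp.2
  · rintro q ⟨hq, hqcd⟩
    obtain ⟨p, hp, hqp⟩ := Set.mem_iUnion₂.mp hq
    have hq' := pureTens_inter_pureBox (f p.1) (f c) (g p.2) (g d) ▸ Set.mem_inter hqp hqcd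
    rw [← map_inf, ← map_inf] at hq'
    rcases hq' with hq' | hq'
    · have hmem : (p.1 ⊓ c, p.2) ∈ X ∩ pureBox c d :=
        ⟨hX p hp (Or.inl ⟨inf_le_left, le_rfl⟩), Or.inl inf_le_right⟩
      exact pureTens_subset_tensMap hmem hq'
    · have hmem : (p.1, p.2 ⊓ d) ∈ X ∩ pureBox c d :=
        ⟨hX p hp (Or.inl ⟨le_rfl, inf_le_left⟩), Or.inr inf_le_right⟩
      exact pureTens_subset_tensMap hmem hq'

theorem tensMap_inter_biInter_pureBox {X : Set (A × B)} (hX : IsTensorClosed X)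
    (s : Finset (A × B)) :
    tensMap f g (X ∩ ⋂ p ∈ s, pureBox p.1 p.2) =
      tensMap f g X ∩ ⋂ p ∈ s, pureBox (f p.1) (g p.2) := by
  classical
  induction s using Finset.induction_on with
  | empty => simp
  | insert p s _ ih =>
    rw [Finset.set_biInter_insert, Finset.set_biInter_insert, Set.inter_left_comm,
      Set.inter_comm, tensMap_inter_pureBox (hX.inter (isTensorClosed_biInter_pureBox s _ _)), ih,
      Set.inter_left_comm, Set.inter_comm]

theorem tensMap_inter {H K : Set (A × B)} (hH : IsTensorClosed H) (hK : K ∈ BoxProd A B) :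
    tensMap f g (H ∩ K) = tensMap f g H ∩ tensMap f g K := by
  obtain ⟨s, -, rfl⟩ := mem_boxProd_iff.mp hK
  refine (Set.subset_inter (tensMap_mono Set.inter_subset_left)
    (tensMap_mono Set.inter_subset_right)).antisymm ?_
  rw [tensMap_inter_biInter_pureBox hH]
  exact Set.inter_subset_inter_right _ (tensMap_biInter_pureBox_subset s)

end TensMap

section TensMapBot

variable {A A' B B' : Type*} [Lattice A] [OrderBot A] [Lattice A'] [OrderBot A']
  [Lattice B] [OrderBot B] [Lattice B'] [OrderBot B'] {f : LatticeHom A A'} {g : LatticeHom B B'}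

theorem isTensorClosed_pureTens (a : A) (b : B) : IsTensorClosed (pureTens a b) := by
  rw [pureTens_eq_pureBox_inter_pureBox]
  exact (isTensorClosed_pureBox _ _).inter (isTensorClosed_pureBox _ _)

theorem LatticeHom.isBot_map_iff (hf0 : f ⊥ = ⊥) (hf : Function.Injective f) {x : A} :
    IsBot (f x) ↔ IsBot x := by
  rw [isBot_iff_eq_bot, isBot_iff_eq_bot, ← hf0, hf.eq_iff]

theorem mk_mem_pureTens_map (hf0 : f ⊥ = ⊥) (hg0 : g ⊥ = ⊥) {p : A × B} {a : A} {b : B}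
    (hp : p ∈ pureTens a b) : (f p.1, g p.2) ∈ pureTens (f a) (g b) := by
  rcases hp with ⟨h₁, h₂⟩ | h | h
  · exact Or.inl ⟨OrderHomClass.mono f h₁, OrderHomClass.mono g h₂⟩
  · exact Or.inr (Or.inl (by rw [isBot_iff_eq_bot.mp h, hf0]; exact isBot_bot))
  · exact Or.inr (Or.inr (by rw [isBot_iff_eq_bot.mp h, hg0]; exact isBot_bot))

theorem mk_mem_pureTens_map_iff (hf0 : f ⊥ = ⊥) (hg0 : g ⊥ = ⊥) (hf : Function.Injective f)
    (hg : Function.Injective g) {p : A × B} {a : A} {b : B} :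
    (f p.1, g p.2) ∈ pureTens (f a) (g b) ↔ p ∈ pureTens a b := by
  have hf' (x y : A) : f x ≤ f y ↔ x ≤ y := (orderEmbeddingOfInjective f hf).le_iff_le
  have hg' (x y : B) : g x ≤ g y ↔ x ≤ y := (orderEmbeddingOfInjective g hg).le_iff_le
  simp only [pureTens, pureCirc, Set.mem_union, Set.mem_ofPred_eq, hf', hg',
    LatticeHom.isBot_map_iff hf0 hf, LatticeHom.isBot_map_iff hg0 hg]

theorem tensMap_pureTens (hf0 : f ⊥ = ⊥) (hg0 : g ⊥ = ⊥) (a : A) (b : B) :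
    tensMap f g (pureTens a b) = pureTens (f a) (g b) :=
  (tensMap_subset (isTensorClosed_pureTens _ _) fun _ hp =>
    mk_mem_pureTens_map hf0 hg0 hp).antisymm (pureTens_subset_tensMap (mem_pureTens_self a b))

theorem tensMap_mem_latTens (hf0 : f ⊥ = ⊥) (hg0 : g ⊥ = ⊥) {X : Set (A × B)}
    (hX : X ∈ LatTens A B) : tensMap f g X ∈ LatTens A' B' := by
  classical
  obtain ⟨a, b, s, rfl⟩ := mem_latTens_iff.mp hX
  refine mem_latTens_iff.mpr ⟨f a, g b, s.image (Prod.map f g), ?_⟩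
  rw [tensMap_inter_biInter_pureBox (isTensorClosed_pureTens a b), tensMap_pureTens hf0 hg0,
    Finset.set_biInter_finset_image]
  rfl

theorem tensMap_boxCl_biUnion_pureTens_subset (hf0 : f ⊥ = ⊥) (hg0 : g ⊥ = ⊥)
    (R : Finset (A × B)) :
    tensMap f g (BoxCl (⋃ r ∈ R, pureTens r.1 r.2)) ⊆
      BoxCl (tensMap f g (⋃ r ∈ R, pureTens r.1 r.2)) := by
  classical
  refine tensMap_subset (isTensorClosed_boxCl _) fun p hp => ?_
  refine Set.mem_iInter₂.mpr fun c d => Set.mem_iInter.mpr fun hcd => ?_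
  have hR : ∀ r ∈ R, f r.1 ≤ c ∨ g r.2 ≤ d := fun r hr =>
    hcd (mk_mem_tensMap (Set.mem_biUnion hr (mem_pureTens_self r.1 r.2)))
  set T := R.filter (f ·.1 ≤ c)
  have hTc : f (T.sup Prod.fst) ≤ c := by
    rw [Finset.apply_sup_eq_sup_comp f (map_sup f) hf0]
    exact Finset.sup_le fun r hr => (Finset.mem_filter.mp hr).2
  have hTd : g ((R \ T).sup Prod.snd) ≤ d := by
    rw [Finset.apply_sup_eq_sup_comp g (map_sup g) hg0]
    refine Finset.sup_le fun r hr => ?_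
    obtain ⟨hrR, hrT⟩ := Finset.mem_sdiff.mp hr
    exact (hR r hrR).resolve_left fun h => hrT (Finset.mem_filter.mpr ⟨hrR, h⟩)
  have hp' := boxCl_subset_pureBox (biUnion_pureTens_subset_pureBox_sup R T) hp
  exact (mk_mem_pureBox_map hp').imp (·.trans hTc) (·.trans hTd)

theorem tensMap_boxCl_union (hf0 : f ⊥ = ⊥) (hg0 : g ⊥ = ⊥) {H K : Set (A × B)}
    (hH : H ∈ LatTens A B) (hK : K ∈ LatTens A B) :
    tensMap f g (BoxCl (H ∪ K)) = BoxCl (tensMap f g H ∪ tensMap f g K) := by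
  classical
  obtain ⟨P, rfl⟩ := exists_eq_biUnion_pureTens_of_mem_latTens hH
  obtain ⟨Q, rfl⟩ := exists_eq_biUnion_pureTens_of_mem_latTens hK
  rw [← tensMap_union, ← Finset.set_biUnion_union]
  refine (tensMap_boxCl_biUnion_pureTens_subset hf0 hg0 _).antisymm ?_
  exact boxCl_subset_of_mem_boxProd
    (tensMap_mem_latTens hf0 hg0 (boxCl_biUnion_pureTens_mem_latTens _)).1
    (tensMap_mono (subset_boxCl _))

theorem mk_mem_tensMap_iff (hf0 : f ⊥ = ⊥) (hg0 : g ⊥ = ⊥) (hf : Function.Injective f)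
    (hg : Function.Injective g) {X : Set (A × B)} (hX : IsTensorClosed X) {p : A × B} :
    (f p.1, g p.2) ∈ tensMap f g X ↔ p ∈ X := by
  refine ⟨fun hp => ?_, mk_mem_tensMap⟩
  obtain ⟨q, hq, hpq⟩ := Set.mem_iUnion₂.mp hp
  exact hX q hq ((mk_mem_pureTens_map_iff hf0 hg0 hf hg).mp hpq)

theorem tensMap_injOn (hf0 : f ⊥ = ⊥) (hg0 : g ⊥ = ⊥) (hf : Function.Injective f)
    (hg : Function.Injective g) : Set.InjOn (tensMap f g) (LatTens A B) := by
  intro X hX Y hY hXY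
  ext p
  rw [← mk_mem_tensMap_iff hf0 hg0 hf hg (isTensorClosed_of_mem_boxProd hX.1), hXY,
    mk_mem_tensMap_iff hf0 hg0 hf hg (isTensorClosed_of_mem_boxProd hY.1)]

end TensMapBot

/-- The functorial action of `⊠` on `{∨,0}`-preserving lattice homomorphisms:
`h(X) = ⋃ {f(x) ⊠ g(y) : ⟨x,y⟩ ∈ X}` maps `A ⊠ B` to `A' ⊠ B'`, sends `a ⊠ b` to
`f(a) ⊠ g(b)`, is a `{∨,0}`-homomorphism, and is an embedding when `f, g` are. -/
theorem stmt_16 {A A' B B' : Type*}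
    [Lattice A] [OrderBot A] [Lattice A'] [OrderBot A']
    [Lattice B] [OrderBot B] [Lattice B'] [OrderBot B']
    (f : LatticeHom A A') (g : LatticeHom B B')
    (hf0 : f ⊥ = ⊥) (hg0 : g ⊥ = ⊥) :
    (∀ X ∈ LatTens A B,
      (⋃ p ∈ X, pureTens (f p.1) (g p.2)) ∈ LatTens A' B') ∧
    (∀ (a : A) (b : B),
      (⋃ p ∈ pureTens a b, pureTens (f p.1) (g p.2)) = pureTens (f a) (g b)) ∧
    ((⋃ p ∈ pureTens (⊥ : A) (⊥ : B), pureTens (f p.1) (g p.2)) =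
      pureTens (⊥ : A') (⊥ : B')) ∧
    (∀ H ∈ LatTens A B, ∀ K ∈ LatTens A B,
      (⋃ p ∈ BoxCl (H ∪ K), pureTens (f p.1) (g p.2)) =
        BoxCl ((⋃ p ∈ H, pureTens (f p.1) (g p.2)) ∪
          ⋃ p ∈ K, pureTens (f p.1) (g p.2))) ∧
    (Function.Injective f → Function.Injective g →
      Set.InjOn (fun X : Set (A × B) => ⋃ p ∈ X, pureTens (f p.1) (g p.2))
        (LatTens A B) ∧
      ∀ H ∈ LatTens A B, ∀ K ∈ LatTens A B,
        (⋃ p ∈ H ∩ K, pureTens (f p.1) (g p.2)) =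
          (⋃ p ∈ H, pureTens (f p.1) (g p.2)) ∩
            ⋃ p ∈ K, pureTens (f p.1) (g p.2)) := by
  refine ⟨fun X hX => tensMap_mem_latTens hf0 hg0 hX, tensMap_pureTens hf0 hg0, ?_,
    fun H hH K hK => tensMap_boxCl_union hf0 hg0 hH hK,
    fun hf hg => ⟨tensMap_injOn hf0 hg0 hf hg,
      fun H hH K hK => tensMap_inter (isTensorClosed_of_mem_boxProd hH.1) hK.1⟩⟩
  rw [← hf0, ← hg0]
  exact tensMap_pureTens hf0 hg0 ⊥ ⊥
end

section
/- Let A, B, C be lattices, with A bounded, and let f : B → C be a {1}-sensitive lattice homomorphism. Then the image of A ⊠ B under id_A □ f is contained in A ⊠ C; that is, for every H ∈ A ⊠ B, written H = ⋂_{i<n}(a_i □ b_i), the set ⋂_{i<n}(a_i □ f(b_i)) belongs to A ⊠ C. -/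
/-- A map between ordered sets is `{1}`-sensitive if a top element exists in the
domain iff one exists in the codomain, and tops are mapped to tops. -/
def OneSensitive {α β : Type*} [LE α] [LE β] (f : α → β) : Prop :=
  ((∃ x : α, IsTop x) ↔ (∃ y : β, IsTop y)) ∧ ∀ x : α, IsTop x → IsTop (f x)

/-!
If `⋂ i, a i □ b i ⊆ u ⊠ v`, the candidate confining tensor for `⋂ i, a i □ f (b i)` is
`⊤ ⊠ (f v ⊔ c)` with `c` an upper bound of the `f (b i)`. A point `(x, z)` of the image with
`x, z` not least either has `z ≤ f (b i)` for some `i`, or has `x ≤ a i` for all `i`; in the latter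
case the whole slice `{x} × B` lies in `u ⊠ v`, which forces `v` to be the top of `B`, so that
`f v` is the top of `C` by `{1}`-sensitivity.
-/

theorem mem_iInter_pureBox {A B ι : Type*} [Lattice A] [Lattice B] {a : ι → A} {b : ι → B}
    {p : A × B} : p ∈ ⋂ i, pureBox (a i) (b i) ↔ ∀ i, p.1 ≤ a i ∨ p.2 ≤ b i := by
  simp only [Set.mem_iInter, pureBox, Set.mem_ofPred_eq]

theorem isTop_of_forall_le_or_isBot {B : Type*} [SemilatticeSup B] {v : B}
    (h : ∀ y, y ≤ v ∨ IsBot y) : IsTop v := by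
  intro y
  rcases h (y ⊔ v) with hle | hbot
  · exact le_sup_left.trans hle
  · exact le_sup_left.trans (hbot v)

theorem isTop_of_slice_subset_pureTens {A B : Type*} [Lattice A] [Lattice B] {x u : A} {v : B}
    (hx : ¬IsBot x) (hslice : ∀ y, (x, y) ∈ pureTens u v) : IsTop v :=
  isTop_of_forall_le_or_isBot fun y => by
    rcases hslice y with hcirc | hbot | hbot
    · exact Or.inl hcirc.2
    · exact absurd hbot hx
    · exact Or.inr hbot

theorem Confined.iInter_pureBox_map {A B C ι : Type*} [Lattice A] [OrderTop A] [Lattice B]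
    [Lattice C] [Finite ι] {a : ι → A} {b : ι → B} {f : B → C}
    (hf : ∀ y, IsTop y → IsTop (f y)) (hH : Confined (⋂ i, pureBox (a i) (b i))) :
    Confined (⋂ i, pureBox (a i) (f (b i))) := by
  obtain ⟨u, v, hHuv⟩ := hH
  have : Nonempty C := ⟨f v⟩
  obtain ⟨c, hc⟩ := (Set.finite_range fun i => f (b i)).bddAbove
  refine ⟨⊤, f v ⊔ c, ?_⟩
  rintro ⟨x, z⟩ hxz
  rw [mem_iInter_pureBox] at hxz
  by_cases hx : IsBot x
  · exact Or.inr (Or.inl hx)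
  by_cases hz : IsBot z
  · exact Or.inr (Or.inr hz)
  refine Or.inl ⟨le_top, ?_⟩
  by_cases hzb : ∃ i, z ≤ f (b i)
  · obtain ⟨i, hi⟩ := hzb
    exact le_sup_of_le_right (hi.trans (hc ⟨i, rfl⟩))
  push Not at hzb
  have hslice : ∀ y, (x, y) ∈ pureTens u v := fun y =>
    hHuv (mem_iInter_pureBox.2 fun i => Or.inl ((hxz i).resolve_right (hzb i)))
  exact le_sup_of_le_left (hf v (isTop_of_slice_subset_pureTens hx hslice) z)

/-- For `A` bounded and `f : B → C` a `{1}`-sensitive lattice homomorphism, the map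
`id_A □ f` carries `A ⊠ B` into `A ⊠ C`. -/
theorem stmt_18 {A B C : Type*} [Lattice A] [BoundedOrder A] [Lattice B] [Lattice C]
    (f : LatticeHom B C) (hf : OneSensitive f)
    (n : ℕ) (a : Fin (n + 1) → A) (b : Fin (n + 1) → B)
    (hH : (⋂ i, pureBox (a i) (b i)) ∈ LatTens A B) :
    (⋂ i, pureBox (a i) (f (b i))) ∈ LatTens A C :=
  ⟨⟨n, a, fun i => f (b i), rfl⟩, Confined.iInter_pureBox_map hf.2 hH.2⟩
end
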